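/- arXiv:1604.03471 — 5 statements merged into one kernel-verified Lean document; each statement's English description precedes it below -/
import Mathlib

section
/- If a scenario S is contained in the specification L, then the set H = { w | ∃ w' ∈ S, π_I(w) = π_I(w') } is an input assumption that is sufficient for L and compatible with S; in fact, for every strategy σ_∃, H is sufficient for the strategy [S → σ_∃], i.e., H ∩ Out([S → σ_∃]) ⊆ L, and S ⊆ Out([S → σ_∃]). -/
open scoped Classical

universe u v

variable {I : Type u} {O : Type v}

/-- The finite (even) history consisting of the first `n` (input, output) pairs of a word.
A word in `(Σ_I · Σ_O)^ω` is modelled as `w : ℕ → I × O`, where round `n` consists of the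
input letter `(w n).1` followed by the output letter `(w n).2`. -/
def wpref (w : ℕ → I × O) (n : ℕ) : List (I × O) := (List.range n).map w

/-- Outcomes of a controller strategy `σ : (Σ_I·Σ_O)^*·Σ_I → Σ_O`. -/
def OutC (σ : List (I × O) → I → O) : Set (ℕ → I × O) :=
  {w | ∀ n, (w n).2 = σ (wpref w n) (w n).1}

/-- Outcomes of an environment strategy `τ : (Σ_I·Σ_O)^* → Σ_I`. -/
def OutE (τ : List (I × O) → I) : Set (ℕ → I × O) :=
  {w | ∀ n, (w n).1 = τ (wpref w n)}

/-- Input projection `π_I`. -/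
def inputProj (w : ℕ → I × O) : ℕ → I := fun n => (w n).1

/-- `A` is an input assumption: closed under changing output letters. -/
def IsInputAssumption (A : Set (ℕ → I × O)) : Prop :=
  ∀ w w' : ℕ → I × O, inputProj w = inputProj w' → w ∈ A → w' ∈ A

/-- Cylinder `h·(Σ_I·Σ_O)^ω` of an even history `h`. -/
def cylE (h : List (I × O)) : Set (ℕ → I × O) := {w | wpref w h.length = h}

/-- Cylinder of a general history: an even part plus possibly a pending input letter. -/
def cylH (h : List (I × O) × Option I) : Set (ℕ → I × O) :=
  {w | wpref w h.1.length = h.1 ∧ ∀ i, h.2 = some i → (w h.1.length).1 = i}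

/-- A scenario is coherent: no history is a prefix of two words of `S`
that agree on the next input but disagree on the next output. -/
def Coherent (S : Set (ℕ → I × O)) : Prop :=
  ∀ w ∈ S, ∀ w' ∈ S, ∀ n, wpref w n = wpref w' n → (w n).1 = (w' n).1 → (w n).2 = (w' n).2

/-- The strategy `[S → σ]`: follow a word of the scenario `S` extending the current
history if one exists, and otherwise play `σ`. -/
noncomputable def shiftStrat (S : Set (ℕ → I × O))
    (σ : List (I × O) → I → O) : List (I × O) → I → O := fun h i =>
  if hex : ∃ w, w ∈ S ∧ wpref w h.length = h ∧ (w h.length).1 = i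
  then (hex.choose h.length).2
  else σ h i

/-- `EA(σ) = L ∪ ((Σ_I·Σ_O)^ω \ Out(σ))`. -/
def EA (L : Set (ℕ → I × O)) (σ : List (I × O) → I → O) : Set (ℕ → I × O) :=
  L ∪ (OutC σ)ᶜ

/-- The words doomed for `σ`: some even-length prefix extends to an outcome of `σ`,
but no outcome of `σ` extending that prefix is in `L`. -/
def Doomed (L : Set (ℕ → I × O)) (σ : List (I × O) → I → O) : Set (ℕ → I × O) :=
  {w | ∃ k, (OutC σ ∩ cylE (wpref w k)).Nonempty ∧ OutC σ ∩ cylE (wpref w k) ∩ L = ∅}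

/-- `EA⁻(σ) = EA(σ) \ Doomed(σ)`. -/
def EAminus (L : Set (ℕ → I × O)) (σ : List (I × O) → I → O) : Set (ℕ → I × O) :=
  EA L σ \ Doomed L σ

/-- `A` is sufficient for the specification `L` (for some controller strategy). -/
def Sufficient (L A : Set (ℕ → I × O)) : Prop :=
  ∃ σ : List (I × O) → I → O, OutC σ ∩ A ⊆ L

/-- `A` is output-restrictive. -/
def OutputRestrictive (A : Set (ℕ → I × O)) : Prop :=
  ∃ (h : List (I × O)) (σ : List (I × O) → I → O),
    (A ∩ cylE h).Nonempty ∧ (OutC σ ∩ cylE h).Nonempty ∧ A ∩ OutC σ ∩ cylE h = ∅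

/-- The even history of length `n` produced jointly by controller `σ` and environment `τ`. -/
def playH (σ : List (I × O) → I → O) (τ : List (I × O) → I) : ℕ → List (I × O)
  | 0 => []
  | n+1 =>
      let g := playH σ τ n
      g ++ [(τ g, σ g (τ g))]

/-- The unique joint outcome `Out(σ, τ)`. -/
def play (σ : List (I × O) → I → O) (τ : List (I × O) → I) : ℕ → I × O := fun n =>
  let g := playH σ τ n
  (τ g, σ g (τ g))

/-- History construction when the controller follows `σ` against the fixed input word `u`. -/
def playIH (σ : List (I × O) → I → O) (u : ℕ → I) : ℕ → List (I × O)
  | 0 => []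
  | n+1 =>
      let g := playIH σ u n
      g ++ [(u n, σ g (u n))]

/-- The unique outcome `Out(σ, u)` of `σ` against the input word `u`. -/
def playI (σ : List (I × O) → I → O) (u : ℕ → I) : ℕ → I × O := fun n =>
  (u n, σ (playIH σ u n) (u n))

/-- Outcomes extending the history `h` and following `σ` afterwards, `Out_h(σ)`. -/
def OutFrom (σ : List (I × O) → I → O) (h : List (I × O) × Option I) :
    Set (ℕ → I × O) :=
  {w | wpref w h.1.length = h.1 ∧ (∀ i, h.2 = some i → (w h.1.length).1 = i) ∧
       ∀ n, h.1.length ≤ n → (w n).2 = σ (wpref w n) (w n).1}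

/-- Even histories extending the finite history `b`, following `σ` and `τ`. -/
def extH (σ : List (I × O) → I → O) (τ : List (I × O) → I)
    (b : List (I × O)) : ℕ → List (I × O)
  | 0 => b
  | n+1 =>
      let g := extH σ τ b n
      g ++ [(τ g, σ g (τ g))]

/-- The unique word extending `b` and following `σ` and `τ` afterwards. -/
def extPlay (σ : List (I × O) → I → O) (τ : List (I × O) → I)
    (b : List (I × O)) : ℕ → I × O := fun n =>
  if hn : n < b.length then b.get ⟨n, hn⟩
  else
    let g := extH σ τ b (n - b.length)
    (τ g, σ g (τ g))

/-- The even history obtained from the general history `h`, letting `σ` answer a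
pending input letter if there is one. -/
def histBase (σ : List (I × O) → I → O) (h : List (I × O) × Option I) :
    List (I × O) :=
  match h.2 with
  | none => h.1
  | some i => h.1 ++ [(i, σ h.1 i)]

/-- `Out_h(σ, τ)`: the unique word extending `h`, following `σ` and `τ` afterwards. -/
def playFrom (σ : List (I × O) → I → O) (τ : List (I × O) → I)
    (h : List (I × O) × Option I) : ℕ → I × O :=
  extPlay σ τ (histBase σ h)

/-- `σ` is strongly winning for `L`. -/
def StronglyWinning (L : Set (ℕ → I × O)) (σ : List (I × O) → I → O) : Prop :=
  ∀ h : List (I × O) × Option I,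
    (∃ σ' : List (I × O) → I → O, (OutC σ' ∩ cylH h).Nonempty ∧ OutC σ' ∩ cylH h ⊆ L) →
    OutC σ ∩ cylH h ⊆ L

/-- `σ` is subgame winning for `L`. -/
def SubgameWinning (L : Set (ℕ → I × O)) (σ : List (I × O) → I → O) : Prop :=
  ∀ h : List (I × O) × Option I,
    (∃ σ' : List (I × O) → I → O, OutFrom σ' h ⊆ L) → OutFrom σ h ⊆ L

lemma wpref_length (w : ℕ → I × O) (n : ℕ) : (wpref w n).length = n := by
  simp [wpref]

lemma shiftStrat_spec (S : Set (ℕ → I × O)) (σ : List (I × O) → I → O)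
    (h : List (I × O)) (i : I)
    (hex : ∃ v, v ∈ S ∧ wpref v h.length = h ∧ (v h.length).1 = i) :
    ∃ v, v ∈ S ∧ wpref v h.length = h ∧ (v h.length).1 = i ∧
      shiftStrat S σ h i = (v h.length).2 :=
  ⟨hex.choose, hex.choose_spec.1, hex.choose_spec.2.1, hex.choose_spec.2.2,
    by rw [shiftStrat, dif_pos hex]⟩

/-- from a scenario `S ⊆ L`, the set
`H = {w | ∃ w' ∈ S, π_I(w) = π_I(w')}` is an input assumption sufficient
for every strategy `[S → σ]`, which is itself compatible with `S`. -/
theorem input_assumption_from_scenario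
    (L S : Set (ℕ → I × O)) (hcoh : Coherent S) (hSL : S ⊆ L) :
    IsInputAssumption {w : ℕ → I × O | ∃ w' ∈ S, inputProj w = inputProj w'} ∧
    ∀ σ : List (I × O) → I → O,
      {w : ℕ → I × O | ∃ w' ∈ S, inputProj w = inputProj w'} ∩
          OutC (shiftStrat S σ) ⊆ L ∧
      S ⊆ OutC (shiftStrat S σ) := by
  have hSout : ∀ σ : List (I × O) → I → O, S ⊆ OutC (shiftStrat S σ) := by
    intro σ w hw n
    obtain ⟨v, hvS, hvp, hvi, hval⟩ :=
      shiftStrat_spec S σ (wpref w n) ((w n).1)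
        ⟨w, hw, by rw [wpref_length], by rw [wpref_length]⟩
    rw [wpref_length] at hvp hvi hval
    rw [hval]
    exact (hcoh v hvS w hw n hvp hvi).symm
  refine ⟨fun w w' hproj hw => ?_, fun σ => ⟨?_, hSout σ⟩⟩
  · obtain ⟨v, hvS, hv⟩ := hw
    exact ⟨v, hvS, hproj.symm.trans hv⟩
  · rintro w ⟨⟨w', hw'S, hproj⟩, hout⟩
    have key : ∀ n, w n = w' n := by
      intro n
      induction n using Nat.strong_induction_on with
      | _ n ih =>
        have hp : wpref w n = wpref w' n := by
          unfold wpref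
          exact List.map_congr_left (fun m hm => ih m (List.mem_range.mp hm))
        have hin : (w n).1 = (w' n).1 := congrFun hproj n
        obtain ⟨v, hvS, hvp, hvi, hval⟩ := shiftStrat_spec S σ (wpref w n) ((w n).1)
          ⟨w', hw'S, by rw [wpref_length]; exact hp.symm,
            by rw [wpref_length]; exact hin.symm⟩
        rw [wpref_length] at hvp hvi hval
        have hout2 : (w n).2 = (w' n).2 := by
          rw [hout n, hval]
          exact hcoh v hvS w' hw'S n (hvp.trans hp) (hvi.trans hin)
        exact Prod.ext hin hout2
    have : w = w' := funext key
    exact this ▸ hSL hw'S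
end

section
/- For the specification L = F i_1 (all words whose input projection eventually contains the letter i_1) and scenario S = L, there is no safety assumption that is sufficient for L and compatible with S: any safety assumption containing S must equal (Σ_I·Σ_O)^ω, which is not sufficient for L. -/
open scoped Classical

universe u v

variable {I : Type u} {O : Type v}

lemma wpref_succ' (w : ℕ → I × O) (n : ℕ) : wpref w (n+1) = wpref w n ++ [w n] := by
  simp [wpref, List.range_succ]

lemma wpref_playI' (σ : List (I × O) → I → O) (u : ℕ → I) (n : ℕ) :
    wpref (playI σ u) n = playIH σ u n := by
  induction n with
  | zero => simp [wpref, playIH]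
  | succ n ih => rw [wpref_succ', ih]; rfl

lemma playI_mem' (σ : List (I × O) → I → O) (u : ℕ → I) : playI σ u ∈ OutC σ := by
  intro n
  rw [wpref_playI']
  rfl

/-- for `L = F i_1` (with `i_1 := true`), any safety assumption
containing `L` is the full set of words, and the full set is not sufficient for `L`. -/
theorem no_safety_assumption_for_F_i1 :
    (∀ A : Set (ℕ → Bool × Bool),
        (∀ w ∉ A, ∃ k, cylE (wpref w k) ∩ A = ∅) →
        {w : ℕ → Bool × Bool | ∃ k, (w k).1 = true} ⊆ A → A = Set.univ) ∧
    ¬ ∃ σ : List (Bool × Bool) → Bool → Bool,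
        OutC σ ∩ (Set.univ : Set (ℕ → Bool × Bool)) ⊆
          {w : ℕ → Bool × Bool | ∃ k, (w k).1 = true} := by
  constructor
  · intro A hsafe hL
    by_contra hne
    obtain ⟨w, hw⟩ : ∃ w, w ∉ A := by
      by_contra h; push_neg at h; exact hne (Set.eq_univ_of_forall h)
    obtain ⟨k, hk⟩ := hsafe w hw
    set w' : ℕ → Bool × Bool := fun n => if n < k then w n else (true, false) with hw'
    have hmem : w' ∈ cylE (wpref w k) ∩ A := by
      constructor
      · show wpref w' (wpref w k).length = wpref w k
        have hlen : (wpref w k).length = k := by simp [wpref]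
        rw [hlen]
        apply List.map_congr_left
        intro a ha
        simp only [List.mem_range] at ha
        simp [hw', ha]
      · apply hL
        exact ⟨k, by simp [hw']⟩
    rw [hk] at hmem
    exact hmem
  · rintro ⟨σ, hσ⟩
    have := hσ (Set.mem_inter (playI_mem' σ (fun _ => false)) (Set.mem_univ _))
    obtain ⟨k, hk⟩ := this
    simp [playI] at hk
end

section
/- For any controller strategy σ_∃ and specification L, the assumption EA(σ_∃) = L ∪ ((Σ_I·Σ_O)^ω \ Out(σ_∃)) is sufficient for σ_∃, and it is necessary for σ_∃: every assumption B that is sufficient for σ_∃ satisfies B ⊆ EA(σ_∃). -/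
open scoped Classical

universe u v

variable {I : Type u} {O : Type v}

/-- `EA(σ) = L ∪ Out(σ)ᶜ` is sufficient for `σ` and necessary for `σ`. -/
theorem EA_sufficient_and_necessary
    (L : Set (ℕ → I × O)) (σ : List (I × O) → I → O) :
    OutC σ ∩ EA L σ ⊆ L ∧
    ∀ B : Set (ℕ → I × O), OutC σ ∩ B ⊆ L → B ⊆ EA L σ := by
  constructor
  · rintro w ⟨hw, hL | hno⟩
    · exact hL
    · exact absurd hw hno
  · intro B hB w hw
    by_cases h : w ∈ OutC σ
    · exact Or.inl (hB ⟨h, hw⟩)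
    · exact Or.inr h
end

section
/- If an assumption A is optimal for L (A is sufficient for L and no sufficient assumption strictly contains A), then there exists a strategy σ_∃ with A = EA(σ_∃) = L ∪ ((Σ_I·Σ_O)^ω \ Out(σ_∃)). -/
open scoped Classical

universe u v

variable {I : Type u} {O : Type v}

/-- an optimal assumption is `EA(σ)` for some strategy `σ`. -/
theorem optimal_is_EA (L A : Set (ℕ → I × O))
    (hsuff : Sufficient L A)
    (hopt : ∀ B : Set (ℕ → I × O), Sufficient L B → ¬ A ⊂ B) :
    ∃ σ : List (I × O) → I → O, A = EA L σ := by
  obtain ⟨σ, hσ⟩ := hsuff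
  refine ⟨σ, ?_⟩
  have hsub : A ⊆ EA L σ := fun w hw => by
    by_cases h : w ∈ OutC σ
    · exact Or.inl (hσ ⟨h, hw⟩)
    · exact Or.inr h
  have hEAsuff : Sufficient L (EA L σ) :=
    ⟨σ, fun w ⟨hout, hEA⟩ => hEA.resolve_right (fun h => h hout)⟩
  have := hopt (EA L σ) hEAsuff
  by_contra hne
  exact this ⟨hsub, fun h => hne (le_antisymm hsub h)⟩
end

section
/- Let σ_∃ be a subgame winning strategy for L and S a coherent scenario with S ⊆ L. Then EA([S → σ_∃]) is optimal for L and S: it is sufficient for L and compatible with S, and any assumption H sufficient for L and S that contains EA([S → σ_∃]) equals it. -/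
open scoped Classical

universe u v

variable {I : Type u} {O : Type v}

/-- `H` is sufficient for `L` and the scenario `S`. -/
def SufficientLS (L S H : Set (ℕ → I × O)) : Prop :=
  ∃ σ : List (I × O) → I → O, S ⊆ H ∩ OutC σ ∧ H ∩ OutC σ ⊆ L

lemma wpref_eq_wpref_iff {w v : ℕ → I × O} {n : ℕ} :
    wpref w n = wpref v n ↔ ∀ k < n, w k = v k := by
  simp [wpref, List.map_inj_left]

lemma wpref_eq_wpref_of_le {w v : ℕ → I × O} {m n : ℕ} (hmn : m ≤ n)
    (h : wpref w n = wpref v n) : wpref w m = wpref v m :=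
  wpref_eq_wpref_iff.2 fun k hk => wpref_eq_wpref_iff.1 h k (hk.trans_le hmn)

lemma mem_OutFrom_wpref_some {σ : List (I × O) → I → O} {x w : ℕ → I × O} {m : ℕ} {i : I} :
    x ∈ OutFrom σ (wpref w m, some i) ↔
      wpref x m = wpref w m ∧ (x m).1 = i ∧ ∀ n, m ≤ n → (x n).2 = σ (wpref x n) (x n).1 := by
  simp [OutFrom, wpref_length]

lemma exists_first_deviation {σ : List (I × O) → I → O} {w : ℕ → I × O} (hw : w ∉ OutC σ) :
    ∃ m, (w m).2 ≠ σ (wpref w m) (w m).1 ∧ ∀ k < m, (w k).2 = σ (wpref w k) (w k).1 := by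
  have hdev : ∃ m, (w m).2 ≠ σ (wpref w m) (w m).1 := by simpa [OutC] using hw
  exact ⟨Nat.find hdev, Nat.find_spec hdev, fun k hk => not_not.1 (Nat.find_min hdev hk)⟩

lemma EA_inter_OutC_subset (L : Set (ℕ → I × O)) (σ : List (I × O) → I → O) :
    EA L σ ∩ OutC σ ⊆ L :=
  fun _ ⟨hEA, hout⟩ => hEA.resolve_right (· hout)

def ScenarioMatches (S : Set (ℕ → I × O)) (w : ℕ → I × O) (n : ℕ) : Prop :=
  ∃ s ∈ S, wpref s n = wpref w n ∧ (s n).1 = (w n).1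

lemma ScenarioMatches.mono {S : Set (ℕ → I × O)} {w : ℕ → I × O} {m n : ℕ} (hmn : m ≤ n)
    (h : ScenarioMatches S w n) : ScenarioMatches S w m := by
  obtain ⟨s, hs, hpref, hin⟩ := h
  rcases hmn.eq_or_lt with rfl | hlt
  · exact ⟨s, hs, hpref, hin⟩
  · exact ⟨s, hs, wpref_eq_wpref_of_le hmn hpref, by rw [wpref_eq_wpref_iff.1 hpref m hlt]⟩

section shiftStrat

variable {S : Set (ℕ → I × O)} {σ : List (I × O) → I → O} {w : ℕ → I × O} {n : ℕ}

lemma shiftStrat_wpref_of_mem (hcoh : Coherent S) {s : ℕ → I × O} (hs : s ∈ S)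
    (hpref : wpref s n = wpref w n) (hin : (s n).1 = (w n).1) :
    shiftStrat S σ (wpref w n) (w n).1 = (s n).2 := by
  have hex : ∃ v, v ∈ S ∧ wpref v (wpref w n).length = wpref w n ∧
      (v (wpref w n).length).1 = (w n).1 := ⟨s, hs, by rwa [wpref_length], by rwa [wpref_length]⟩
  rw [shiftStrat, dif_pos hex]
  obtain ⟨hv, hvpref, hvin⟩ := hex.choose_spec
  generalize hex.choose = v at hv hvpref hvin ⊢
  rw [wpref_length] at hvpref hvin ⊢
  exact hcoh _ hv s hs n (hvpref.trans hpref.symm) (hvin.trans hin.symm)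

lemma shiftStrat_wpref_of_not_scenarioMatches (h : ¬ ScenarioMatches S w n) :
    shiftStrat S σ (wpref w n) (w n).1 = σ (wpref w n) (w n).1 := by
  refine dif_neg ?_
  rintro ⟨s, hs, hpref, hin⟩
  rw [wpref_length] at hpref hin
  exact h ⟨s, hs, hpref, hin⟩

lemma Coherent.subset_OutC_shiftStrat (hcoh : Coherent S) : S ⊆ OutC (shiftStrat S σ) :=
  fun _ hs _ => (shiftStrat_wpref_of_mem hcoh hs rfl rfl).symm

lemma mem_OutFrom_of_not_scenarioMatches (hw : w ∈ OutC (shiftStrat S σ))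
    (h : ¬ ScenarioMatches S w n) : w ∈ OutFrom σ (wpref w n, some (w n).1) := by
  refine mem_OutFrom_wpref_some.2 ⟨rfl, rfl, fun k hk => ?_⟩
  rw [hw k, shiftStrat_wpref_of_not_scenarioMatches (fun hk' => h (hk'.mono hk))]

lemma not_scenarioMatches_of_deviation {σ₀ : List (I × O) → I → O} (hcoh : Coherent S)
    (hSσ₀ : S ⊆ OutC σ₀) (hw : w ∈ OutC (shiftStrat S σ))
    (hdev : (w n).2 ≠ σ₀ (wpref w n) (w n).1) : ¬ ScenarioMatches S w n := by
  rintro ⟨s, hs, hpref, hin⟩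
  apply hdev
  rw [hw n, shiftStrat_wpref_of_mem hcoh hs hpref hin, hSσ₀ hs n, hpref, hin]

end shiftStrat

section OutFrom

variable {τ σ₀ : List (I × O) → I → O} {w : ℕ → I × O} {m : ℕ} {o : Option I}

lemma OutFrom_subset_OutC (hw : ∀ k < m, (w k).2 = σ₀ (wpref w k) (w k).1) :
    OutFrom σ₀ (wpref w m, o) ⊆ OutC σ₀ := by
  rintro x ⟨hpref, -, hfollow⟩
  rw [wpref_length] at hpref hfollow
  intro n
  rcases lt_or_ge n m with hn | hn
  · rw [wpref_eq_wpref_iff.1 hpref n hn, wpref_eq_wpref_of_le hn.le hpref]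
    exact hw n hn
  · exact hfollow n hn

lemma OutFrom_subset_compl_OutC (hw : w ∈ OutC τ) (hdev : (w m).2 ≠ σ₀ (wpref w m) (w m).1) :
    OutFrom σ₀ (wpref w m, some (w m).1) ⊆ (OutC τ)ᶜ := by
  intro x hx hxτ
  obtain ⟨hpref, hin, hfollow⟩ := mem_OutFrom_wpref_some.1 hx
  apply hdev
  rw [hw m, ← hpref, ← hin, ← hxτ m, hfollow m le_rfl]

end OutFrom

lemma inter_OutC_shiftStrat_subset {L S H : Set (ℕ → I × O)} {σ σ₀ : List (I × O) → I → O}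
    (hsg : SubgameWinning L σ) (hcoh : Coherent S) (hSσ₀ : S ⊆ OutC σ₀)
    (hHL : H ∩ OutC σ₀ ⊆ L) (hEAH : EA L (shiftStrat S σ) ⊆ H) :
    H ∩ OutC (shiftStrat S σ) ⊆ L := by
  rintro w ⟨hwH, hw⟩
  by_contra hwL
  obtain ⟨m, hdev, hprefix⟩ := exists_first_deviation fun hw₀ => hwL (hHL ⟨hwH, hw₀⟩)
  have hσ₀_wins : OutFrom σ₀ (wpref w m, some (w m).1) ⊆ L := fun x hx =>
    hHL ⟨hEAH (Or.inr (OutFrom_subset_compl_OutC hw hdev hx)), OutFrom_subset_OutC hprefix hx⟩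
  exact hwL <| hsg _ ⟨σ₀, hσ₀_wins⟩ <|
    mem_OutFrom_of_not_scenarioMatches hw (not_scenarioMatches_of_deviation hcoh hSσ₀ hw hdev)

/-- if `σ` is subgame winning for `L` and `S` is a coherent scenario
contained in `L`, then `EA([S → σ])` is optimal for `L` and `S`. -/
theorem EA_shift_optimal_for_scenario
    (L S : Set (ℕ → I × O)) (σ : List (I × O) → I → O)
    (hsg : SubgameWinning L σ) (hcoh : Coherent S) (hSL : S ⊆ L) :
    SufficientLS L S (EA L (shiftStrat S σ)) ∧
    ∀ H : Set (ℕ → I × O), SufficientLS L S H →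
      EA L (shiftStrat S σ) ⊆ H → H = EA L (shiftStrat S σ) := by
  refine ⟨⟨shiftStrat S σ, fun s hs => ⟨Or.inl (hSL hs), hcoh.subset_OutC_shiftStrat hs⟩,
    EA_inter_OutC_subset L _⟩, ?_⟩
  rintro H ⟨σ₀, hSH, hHL⟩ hEAH
  refine Set.Subset.antisymm (fun w hwH => ?_) hEAH
  by_cases hw : w ∈ OutC (shiftStrat S σ)
  · exact Or.inl <| inter_OutC_shiftStrat_subset hsg hcoh (fun s hs => (hSH hs).2) hHL hEAH
      ⟨hwH, hw⟩
  · exact Or.inr hw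
end
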